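/- Let S be a C-system of filters and let a ∈ C be infinite. Then dF_a = {dom[A] : A ∈ F_a} generates a normal and fine filter on P(a), where dom[A] = {dom(f) : f ∈ A}. In particular, if a is uncountable then dom[A] is stationary in P(a) for every A ∈ F_a. -/

import Mathlib

noncomputable section

namespace CSF

/-- Code a class of ZF-sets as a `ZFSet` whenever it is extensionally a set
(otherwise return `∅`). -/
def zcode (A : Set ZFSet) : ZFSet := by
  classical exact if h : ∃ z : ZFSet, z.toSet = A then h.choose else ∅

/-- Iterated union. -/
def itUnion : ℕ → ZFSet → ZFSet
  | 0, a => a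
  | n + 1, a => ZFSet.sUnion (itUnion n a)

/-- The transitive closure of a set. -/
def trcl (a : ZFSet) : ZFSet :=
  zcode {x | ∃ n : ℕ, x ∈ itUnion n a}

/-- `M` is extensional if the membership relation restricted to `M` satisfies
extensionality. -/
def Extensional (M : ZFSet) : Prop :=
  ∀ x ∈ M, ∀ y ∈ M, (∀ z ∈ M, z ∈ x ↔ z ∈ y) → x = y

/-- The Mostowski collapse map of `M`, defined by ∈-recursion:
`mos M x = {mos M y : y ∈ x ∩ M}`. -/
def mos (M : ZFSet) : ZFSet → ZFSet :=
  ZFSet.mem_wf.fix fun x IH =>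
    zcode {z | ∃ y, ∃ hy : y ∈ x, y ∈ M ∧ z = IH y hy}

/-- The function `π_M ↾ (a ∩ M)` coded as a set of Kuratowski pairs. -/
def funOf (M a : ZFSet) : ZFSet :=
  zcode {p | ∃ x, x ∈ a ∧ x ∈ M ∧ p = ZFSet.pair x (mos M x)}

/-- `O_a`: the set of restrictions `π_M ↾ (a ∩ M)` of Mostowski collapses of
extensional subsets `M ⊆ trcl(a)`. -/
def O (a : ZFSet) : Set ZFSet :=
  {f | ∃ M : ZFSet, M ⊆ trcl a ∧ Extensional M ∧ f = funOf M a}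

/-- Domain (as a class) of a coded function. -/
def zdom (f : ZFSet) : Set ZFSet := {x | ∃ y, ZFSet.pair x y ∈ f}

/-- Domain (as a set) of a coded function. -/
def zdomZ (f : ZFSet) : ZFSet := zcode (zdom f)

/-- Range (as a set) of a coded function. -/
def zranZ (f : ZFSet) : ZFSet := zcode {y | ∃ x, ZFSet.pair x y ∈ f}

/-- Application of a coded function. -/
def app (f x : ZFSet) : ZFSet :=
  zcode {z | ∃ y, ZFSet.pair x y ∈ f ∧ z ∈ y}

/-- Restriction `f ↾ a` of a coded function; this is the standard projection
`π_{ba}(f) = f ↾ a` for `f ∈ O_b`, `a ⊆ b`. -/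
def restr (f a : ZFSet) : ZFSet :=
  zcode {p | p ∈ f ∧ ∃ x y, x ∈ a ∧ p = ZFSet.pair x y}

/-- A directed set of domains: closed under subsets and (binary) unions, with
transitive union. -/
structure IsDirectedDomains (C : Set ZFSet) : Prop where
  subset_mem : ∀ a ∈ C, ∀ b : ZFSet, b ⊆ a → b ∈ C
  union_mem : ∀ a ∈ C, ∀ b ∈ C, a ∪ b ∈ C
  transitive : ∀ a ∈ C, ∀ x, x ∈ a → ∀ y, y ∈ x → ({y} : ZFSet) ∈ C

/-- A `C`-system of filters: a family of non-trivial filters `F a` on `P(O_a)` for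
`a ∈ C`, satisfying fineness, compatibility and normality. -/
structure IsCSystemOfFilters (C : Set ZFSet) (F : ZFSet → Set (Set ZFSet)) : Prop where
  directed : IsDirectedDomains C
  sets_subset : ∀ a ∈ C, ∀ A ∈ F a, A ⊆ O a
  top_mem : ∀ a ∈ C, O a ∈ F a
  empty_not_mem : ∀ a ∈ C, (∅ : Set ZFSet) ∉ F a
  inter_mem : ∀ a ∈ C, ∀ A ∈ F a, ∀ B ∈ F a, A ∩ B ∈ F a
  superset_mem : ∀ a ∈ C, ∀ A ∈ F a, ∀ B : Set ZFSet, A ⊆ B → B ⊆ O a → B ∈ F a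
  fineness : ∀ a ∈ C, ∀ x, x ∈ a → {f | f ∈ O a ∧ x ∈ zdom f} ∈ F a
  compat : ∀ a ∈ C, ∀ b ∈ C, a ⊆ b → ∀ A : Set ZFSet, A ⊆ O a →
    (A ∈ F a ↔ {f | f ∈ O b ∧ restr f a ∈ A} ∈ F b)
  normality : ∀ a ∈ C, ∀ A : Set ZFSet, A ⊆ O a → (O a \ A) ∉ F a →
    ∀ u : ZFSet → ZFSet, (∀ f ∈ A, ∃ x ∈ zdom f, u f = app f x ∨ u f ∈ app f x) →
    ∃ b ∈ C, a ⊆ b ∧ ∃ B : Set ZFSet, B ⊆ {f | f ∈ O b ∧ restr f a ∈ A} ∧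
      (O b \ B) ∉ F b ∧ ∃ y, y ∈ b ∧ ∀ f ∈ B, u (restr f a) = app f y

/-- A `C`-system of ultrafilters. -/
structure IsCSystemOfUltrafilters (C : Set ZFSet) (F : ZFSet → Set (Set ZFSet))
    extends IsCSystemOfFilters C F : Prop where
  ultra : ∀ a ∈ C, ∀ A : Set ZFSet, A ⊆ O a → (A ∈ F a ∨ (O a \ A) ∈ F a)

/-- Representatives of elements of the ultrapower `Ult(V,S)`: a pair of a domain
`a ∈ C` and a function `u : O_a → V`. -/
abbrev PreU : Type 1 := ZFSet × (ZFSet → ZFSet)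

/-- Equality of ultrapower representatives: `u =_S v`. -/
def eqU (F : ZFSet → Set (Set ZFSet)) (p q : PreU) : Prop :=
  {f | f ∈ O (p.1 ∪ q.1) ∧ p.2 (restr f p.1) = q.2 (restr f q.1)} ∈ F (p.1 ∪ q.1)

/-- Membership of ultrapower representatives: `u ∈_S v`. -/
def memU (F : ZFSet → Set (Set ZFSet)) (p q : PreU) : Prop :=
  {f | f ∈ O (p.1 ∪ q.1) ∧ p.2 (restr f p.1) ∈ q.2 (restr f q.1)} ∈ F (p.1 ∪ q.1)

/-- The constant function `c_x`, representing `j(x)`. -/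
def jrep (x : ZFSet) : PreU := (∅, fun _ => x)

/-- The projection `proj_x : O_{{x}} → V`, `f ↦ f(x)`, representing `x`. -/
def projRep (x : ZFSet) : PreU := ({x}, fun f => app f x)

end CSF

namespace CSF

/-- The filter on `P(a)` generated by `dF_a = {dom[A] : A ∈ F_a}`. -/
def dFil (F : ZFSet → Set (Set ZFSet)) (a : ZFSet) : Set (Set ZFSet) :=
  {D | D ⊆ {b : ZFSet | b ⊆ a} ∧ ∃ A ∈ F a, ∀ f ∈ A, zdomZ f ∈ D}

end CSF

/-!
Taking domains pushes `F_a` forward to a filter on `P(a)`, and fineness transfers directly. For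
normality, a choice function `u` on `dom[A]` makes `f ↦ f(u(dom f))` regressive on `A`; normality of
`S` guesses it as `f(y)` for positively many `f ∈ O_b`, and since every `f ∈ O_b` is injective (a
restricted Mostowski collapse of an extensional set), `u(dom (f ↾ a)) = y` there.

A normal fine filter on `P(a)` is closed under diagonal intersections, hence (for infinite `a`)
countably complete, hence it contains the club of closure points of any `g : [a]^{<ω} → a`. So each
`dom[A]` with `A ∈ F_a` meets every such club.
-/

namespace CSF

universe u

section CodedSets

instance small_coe_set (z : ZFSet.{u}) : Small.{u} (z : Set ZFSet.{u}) :=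
  ZFSet.small_coe z

theorem coe_zcode (A : Set ZFSet.{u}) [Small.{u} A] : (zcode A : Set ZFSet.{u}) = A := by
  have hA : ∃ z : ZFSet.{u}, z.toSet = A :=
    ⟨ZFSet.coeEquiv.symm ⟨A, ‹_›⟩, congrArg Subtype.val (ZFSet.coeEquiv.apply_symm_apply _)⟩
  classical
  rw [zcode, dif_pos hA]
  exact hA.choose_spec

theorem mem_zcode {A : Set ZFSet.{u}} [Small.{u} A] {x : ZFSet.{u}} : x ∈ zcode A ↔ x ∈ A := by
  rw [← SetLike.mem_coe, coe_zcode]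

theorem zcode_coe (z : ZFSet.{u}) : zcode z = z :=
  SetLike.coe_injective (coe_zcode z)

instance small_zdom (f : ZFSet.{u}) : Small.{u} (zdom f) := by
  refine small_subset (s := ((f.sUnion.sUnion : ZFSet.{u}) : Set ZFSet.{u})) fun x ⟨y, hxy⟩ => ?_
  refine ZFSet.mem_sUnion.2
    ⟨{x}, ZFSet.mem_sUnion.2 ⟨ZFSet.pair x y, hxy, ?_⟩, ZFSet.mem_singleton.2 rfl⟩
  simp [ZFSet.pair]

theorem mem_zdomZ {f x : ZFSet.{u}} : x ∈ zdomZ f ↔ x ∈ zdom f :=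
  mem_zcode

theorem mem_mos {M x z : ZFSet.{u}} : z ∈ mos M x ↔ ∃ y ∈ x, y ∈ M ∧ z = mos M y := by
  have hsmall : Small.{u} {z | ∃ y ∈ x, y ∈ M ∧ z = mos.{u, u} M y} :=
    small_subset (s := mos M '' x) fun _ ⟨y, hy, _, hz⟩ => ⟨y, hy, hz.symm⟩
  have hmos : mos M x = zcode {z | ∃ y ∈ x, y ∈ M ∧ z = mos.{u, u} M y} := by
    unfold mos
    rw [WellFounded.fix_eq]
    simp only [exists_prop]
  rw [hmos, mem_zcode, Set.mem_ofPred_eq]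

theorem mos_injOn {M : ZFSet.{u}} (hM : Extensional M) {x y : ZFSet.{u}} (hx : x ∈ M)
    (hy : y ∈ M) (hxy : mos.{u, u} M x = mos M y) : x = y := by
  induction x using ZFSet.inductionOn generalizing y with
  | h x IH =>
    refine hM x hx y hy fun z hz => ⟨fun hzx => ?_, fun hzy => ?_⟩
    · obtain ⟨w, hwy, hwM, hzw⟩ := mem_mos.1 (hxy ▸ mem_mos.2 ⟨z, hzx, hz, rfl⟩)
      exact IH z hzx hz hwM hzw ▸ hwy
    · obtain ⟨w, hwx, hwM, hzw⟩ := mem_mos.1 (hxy ▸ mem_mos.2 ⟨z, hzy, hz, rfl⟩)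
      exact (IH w hwx hwM hz hzw.symm).symm ▸ hwx

theorem pair_mem_funOf {M b x y : ZFSet.{u}} :
    ZFSet.pair x y ∈ funOf M b ↔ x ∈ b ∧ x ∈ M ∧ y = mos M x := by
  have hsmall : Small.{u} {p | ∃ x ∈ b, x ∈ M ∧ p = ZFSet.pair x (mos.{u, u} M x)} :=
    small_subset (s := (fun x => ZFSet.pair x (mos M x)) '' b)
      fun _ ⟨x, hx, _, hp⟩ => ⟨x, hx, hp.symm⟩
  simp only [funOf, mem_zcode, Set.mem_ofPred_eq, ZFSet.pair_inj]
  constructor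
  · rintro ⟨x, hx, hxM, rfl, rfl⟩
    exact ⟨hx, hxM, rfl⟩
  · rintro ⟨hx, hxM, rfl⟩
    exact ⟨x, hx, hxM, rfl, rfl⟩

theorem mem_zdomZ_funOf {M b x : ZFSet.{u}} : x ∈ zdomZ (funOf M b) ↔ x ∈ b ∧ x ∈ M := by
  simp only [mem_zdomZ, zdom, Set.mem_ofPred_eq, pair_mem_funOf]
  exact ⟨fun ⟨_, hx, hxM, _⟩ => ⟨hx, hxM⟩, fun ⟨hx, hxM⟩ => ⟨_, hx, hxM, rfl⟩⟩

theorem app_funOf {M b x : ZFSet.{u}} (hx : x ∈ b) (hxM : x ∈ M) :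
    app (funOf M b) x = mos M x := by
  have : {z | ∃ y, ZFSet.pair x y ∈ funOf M b ∧ z ∈ y} = mos M x := by
    ext z
    simp only [Set.mem_ofPred_eq, pair_mem_funOf, hx, hxM, true_and, exists_eq_left]
    rfl
  rw [app, this, zcode_coe]

theorem pair_mem_restr {f a x y : ZFSet.{u}} :
    ZFSet.pair x y ∈ restr f a ↔ ZFSet.pair x y ∈ f ∧ x ∈ a := by
  have hsmall : Small.{u} {p | p ∈ f ∧ ∃ x y, x ∈ a ∧ p = ZFSet.pair x y} :=
    small_subset (s := f) fun _ hp => hp.1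
  simp only [restr, mem_zcode, Set.mem_ofPred_eq, ZFSet.pair_inj]
  constructor
  · rintro ⟨hf, x, y, hx, rfl, rfl⟩
    exact ⟨hf, hx⟩
  · rintro ⟨hf, hx⟩
    exact ⟨hf, x, y, hx, rfl, rfl⟩

theorem mem_zdomZ_restr {f a x : ZFSet.{u}} : x ∈ zdomZ (restr f a) ↔ x ∈ zdomZ f ∧ x ∈ a := by
  simp only [mem_zdomZ, zdom, Set.mem_ofPred_eq, pair_mem_restr, exists_and_right]

theorem app_restr {f a x : ZFSet.{u}} (hx : x ∈ a) : app (restr f a) x = app f x := by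
  simp only [app, pair_mem_restr, hx, and_true]

theorem zdomZ_subset_of_mem_O {a f : ZFSet.{u}} (hf : f ∈ O a) : zdomZ f ⊆ a := by
  obtain ⟨M, -, -, rfl⟩ := hf
  exact fun _ hx => (mem_zdomZ_funOf.1 hx).1

theorem app_injOn_of_mem_O {b f x y : ZFSet.{u}} (hf : f ∈ O b) (hx : x ∈ zdomZ f)
    (hy : y ∈ zdomZ f) (hxy : app f x = app f y) : x = y := by
  obtain ⟨M, -, hM, rfl⟩ := hf
  obtain ⟨hxb, hxM⟩ := mem_zdomZ_funOf.1 hx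
  obtain ⟨hyb, hyM⟩ := mem_zdomZ_funOf.1 hy
  rw [app_funOf hxb hxM, app_funOf hyb hyM] at hxy
  exact mos_injOn hM hxM hyM hxy

end CodedSets

section FilterOn

variable {α β : Type*}

structure IsFilterOn (X : Set α) (𝒢 : Set (Set α)) : Prop where
  subset_of_mem : ∀ A ∈ 𝒢, A ⊆ X
  self_mem : X ∈ 𝒢
  empty_not_mem : ∅ ∉ 𝒢
  inter_mem : ∀ A ∈ 𝒢, ∀ B ∈ 𝒢, A ∩ B ∈ 𝒢
  mem_of_superset : ∀ A ∈ 𝒢, ∀ B, A ⊆ B → B ⊆ X → B ∈ 𝒢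

def Positive (X : Set α) (𝒢 : Set (Set α)) (A : Set α) : Prop :=
  X \ A ∉ 𝒢

namespace IsFilterOn

variable {X : Set α} {𝒢 : Set (Set α)}

theorem nonempty_of_mem (h : IsFilterOn X 𝒢) {A : Set α} (hA : A ∈ 𝒢) : A.Nonempty :=
  Set.nonempty_iff_ne_empty.2 fun hA0 => h.empty_not_mem (hA0 ▸ hA)

theorem positive_inter (h : IsFilterOn X 𝒢) {A B : Set α} (hA : Positive X 𝒢 A) (hB : B ∈ 𝒢) :
    Positive X 𝒢 (A ∩ B) := fun hAB =>
  hA <| h.mem_of_superset _ (h.inter_mem _ hAB _ hB) _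
    (fun _ ⟨⟨hx, hxAB⟩, hxB⟩ => ⟨hx, fun hxA => hxAB ⟨hxA, hxB⟩⟩) Set.sdiff_subset

theorem nonempty_of_positive (h : IsFilterOn X 𝒢) {A : Set α} (hA : Positive X 𝒢 A) :
    A.Nonempty :=
  Set.nonempty_iff_ne_empty.2 fun hA0 => hA (by rw [hA0, Set.sdiff_empty]; exact h.self_mem)

theorem inter_nonempty_of_positive (h : IsFilterOn X 𝒢) {A B : Set α} (hA : Positive X 𝒢 A)
    (hB : B ∈ 𝒢) : (A ∩ B).Nonempty :=
  h.nonempty_of_positive (h.positive_inter hA hB)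

theorem mem_of_not_positive_diff {A : Set α} (hAX : A ⊆ X) (hA : ¬Positive X 𝒢 (X \ A)) :
    A ∈ 𝒢 := by
  rwa [Positive, not_not, Set.sdiff_sdiff_cancel_left hAX] at hA

theorem image {Y : Set β} {φ : α → β} (h : IsFilterOn X 𝒢) (hφ : Set.MapsTo φ X Y) :
    IsFilterOn Y {D | D ⊆ Y ∧ ∃ A ∈ 𝒢, ∀ f ∈ A, φ f ∈ D} where
  subset_of_mem _ hD := hD.1
  self_mem := ⟨subset_rfl, X, h.self_mem, hφ⟩
  empty_not_mem := fun ⟨_, _, hA, hAD⟩ =>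
    let ⟨f, hf⟩ := h.nonempty_of_mem hA
    hAD f hf
  inter_mem := fun _ ⟨hDY, A, hA, hAD⟩ _ ⟨_, A', hA', hAD'⟩ =>
    ⟨fun _ hy => hDY hy.1, A ∩ A', h.inter_mem _ hA _ hA', fun f hf => ⟨hAD f hf.1, hAD' f hf.2⟩⟩
  mem_of_superset := fun _ ⟨_, A, hA, hAD⟩ _ hDE hEY => ⟨hEY, A, hA, fun f hf => hDE (hAD f hf)⟩

theorem positive_image_iff {Y : Set β} {φ : α → β} (h : IsFilterOn X 𝒢) (hφ : Set.MapsTo φ X Y)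
    {D : Set β} :
    Positive Y {D | D ⊆ Y ∧ ∃ A ∈ 𝒢, ∀ f ∈ A, φ f ∈ D} D ↔ Positive X 𝒢 {f ∈ X | φ f ∈ D} := by
  refine not_congr ⟨fun ⟨_, A, hA, hAD⟩ => ?_, fun hD => ?_⟩
  · exact h.mem_of_superset _ hA _
      (fun f hf => ⟨h.subset_of_mem A hA hf, fun hfD => (hAD f hf).2 hfD.2⟩) Set.sdiff_subset
  · exact ⟨Set.sdiff_subset, _, hD, fun f hf => ⟨hφ hf.1, fun hfD => hf.2 ⟨hf.1, hfD⟩⟩⟩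

end IsFilterOn

end FilterOn

section NormalFineFilter

structure IsNormalFineFilter (a : ZFSet.{u}) (𝒟 : Set (Set ZFSet.{u})) : Prop
    extends IsFilterOn {b | b ⊆ a} 𝒟 where
  fine : ∀ x ∈ a, {b | b ⊆ a ∧ x ∈ b} ∈ 𝒟
  normal : ∀ D, Positive {b | b ⊆ a} 𝒟 D → ∀ u : ZFSet.{u} → ZFSet.{u}, (∀ b ∈ D, u b ∈ b) →
    ∃ x, Positive {b | b ⊆ a} 𝒟 {b ∈ D | u b = x}

namespace IsNormalFineFilter

variable {a : ZFSet.{u}} {𝒟 : Set (Set ZFSet.{u})}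

theorem diag_mem (h : IsNormalFineFilter a 𝒟) {E : ZFSet.{u} → Set ZFSet.{u}}
    (hE : ∀ x ∈ a, E x ∈ 𝒟) : {b | b ⊆ a ∧ ∀ x ∈ b, b ∈ E x} ∈ 𝒟 := by
  refine IsFilterOn.mem_of_not_positive_diff (fun _ hb => hb.1) fun hpos => ?_
  have hwitness : ∀ b ∈ {b | b ⊆ a} \ {b | b ⊆ a ∧ ∀ x ∈ b, b ∈ E x}, ∃ x ∈ b, b ∉ E x :=
    fun b ⟨hba, hb⟩ => by by_contra! hall; exact hb ⟨hba, hall⟩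
  choose! v hvb hvE using hwitness
  obtain ⟨x, hx⟩ := h.normal _ hpos v hvb
  obtain ⟨b, hbD, hbx⟩ := h.nonempty_of_positive hx
  have hxa : x ∈ a := hbD.1 (hbx ▸ hvb b hbD)
  obtain ⟨b', ⟨hb'D, hb'x⟩, hb'E⟩ := h.inter_nonempty_of_positive hx (hE x hxa)
  exact hvE b' hb'D (hb'x ▸ hb'E)

/-- Thread the `D n` along an injective sequence `x` in `a`: on a diagonal intersection,
`x n ∈ b` forces both `b ∈ D n` and `x (n + 1) ∈ b`, and fineness supplies `x 0 ∈ b`. -/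
theorem iInter_mem (h : IsNormalFineFilter a 𝒟) (hinf : (a : Set ZFSet.{u}).Infinite)
    {D : ℕ → Set ZFSet.{u}} (hD : ∀ n, D n ∈ 𝒟) : {b | b ⊆ a ∧ ∀ n, b ∈ D n} ∈ 𝒟 := by
  let x : ℕ → ZFSet.{u} := fun n => hinf.natEmbedding _ n
  have hxa : ∀ n, x n ∈ a := fun n => (hinf.natEmbedding _ n).2
  have hx_inj : Function.Injective x := Subtype.val_injective.comp (hinf.natEmbedding _).injective
  let E : ZFSet.{u} → Set ZFSet.{u} := fun z => {b | b ⊆ a ∧ ∀ n, x n = z → b ∈ D n ∧ x (n + 1) ∈ b}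
  have hE : ∀ z ∈ a, E z ∈ 𝒟 := by
    intro z _
    by_cases hz : ∃ n, x n = z
    · obtain ⟨n, rfl⟩ := hz
      refine h.mem_of_superset _ (h.inter_mem _ (hD n) _ (h.fine _ (hxa (n + 1)))) _ ?_
        fun _ hb => hb.1
      rintro b ⟨hbD, hba, hbx⟩
      exact ⟨hba, fun m hm => hx_inj hm ▸ ⟨hbD, hbx⟩⟩
    · exact h.mem_of_superset _ h.self_mem _ (fun b hb => ⟨hb, fun n hn => (hz ⟨n, hn⟩).elim⟩)
        fun _ hb => hb.1
  refine h.mem_of_superset _ (h.inter_mem _ (h.diag_mem hE) _ (h.fine _ (hxa 0))) _ ?_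
    fun _ hb => hb.1
  rintro b ⟨⟨hba, hbE⟩, -, hx0⟩
  have hx : ∀ n, x n ∈ b := fun n => Nat.rec hx0 (fun n hn => ((hbE _ hn).2 n rfl).2) n
  exact ⟨hba, fun n => ((hbE _ (hx n)).2 n rfl).1⟩

theorem closure_card_le_mem (h : IsNormalFineFilter a 𝒟) (n : ℕ) (g : Finset ZFSet.{u} → ZFSet.{u})
    (hg : ∀ s : Finset ZFSet.{u}, ↑s ⊆ (a : Set ZFSet.{u}) → g s ∈ a) :
    {b | b ⊆ a ∧ ∀ s : Finset ZFSet.{u}, s.card ≤ n → ↑s ⊆ (b : Set ZFSet.{u}) → g s ∈ b} ∈ 𝒟 := by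
  classical
  induction n generalizing g with
  | zero =>
    refine h.mem_of_superset _ (h.fine _ (hg ∅ (by simp))) _ ?_ fun _ hb => hb.1
    rintro b ⟨hba, hb⟩
    exact ⟨hba, fun s hs _ => by rwa [Finset.card_eq_zero.1 (Nat.le_zero.1 hs)]⟩
  | succ n IH =>
    have hE : ∀ x ∈ a, {b | b ⊆ a ∧ ∀ s : Finset ZFSet.{u}, s.card ≤ n → ↑s ⊆ (b : Set ZFSet.{u}) →
        g (insert x s) ∈ b} ∈ 𝒟 := fun x hx =>
      IH (fun s => g (insert x s)) fun s hs =>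
        hg _ (by simpa [Set.insert_subset_iff] using ⟨hx, hs⟩)
    refine h.mem_of_superset _ (h.inter_mem _ (IH g hg) _ (h.diag_mem hE)) _ ?_ fun _ hb => hb.1
    rintro b ⟨⟨hba, hb⟩, -, hbE⟩
    refine ⟨hba, fun s hs hsb => ?_⟩
    obtain rfl | ⟨x, hxs⟩ := s.eq_empty_or_nonempty
    · exact hb ∅ (Nat.zero_le n) hsb
    · have := (hbE x (hsb hxs)).2 (s.erase x) (by rw [Finset.card_erase_of_mem hxs]; omega)
        (subset_trans (by simp) hsb)
      rwa [Finset.insert_erase hxs] at this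

theorem closure_mem (h : IsNormalFineFilter a 𝒟) (hinf : (a : Set ZFSet.{u}).Infinite)
    (g : Finset ZFSet.{u} → ZFSet.{u})
    (hg : ∀ s : Finset ZFSet.{u}, ↑s ⊆ (a : Set ZFSet.{u}) → g s ∈ a) :
    {b | b ⊆ a ∧ ∀ s : Finset ZFSet.{u}, ↑s ⊆ (b : Set ZFSet.{u}) → g s ∈ b} ∈ 𝒟 :=
  h.mem_of_superset _ (h.iInter_mem hinf fun n => h.closure_card_le_mem n g hg) _
    (fun _ ⟨hba, hb⟩ => ⟨hba, fun s hs => (hb s.card).2 s le_rfl hs⟩) fun _ hb => hb.1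

end IsNormalFineFilter

end NormalFineFilter

namespace IsCSystemOfFilters

variable {C : Set ZFSet.{u}} {F : ZFSet.{u} → Set (Set ZFSet.{u})} {a : ZFSet.{u}}

theorem isFilterOn (hS : IsCSystemOfFilters C F) (ha : a ∈ C) : IsFilterOn (O a) (F a) :=
  ⟨hS.sets_subset a ha, hS.top_mem a ha, hS.empty_not_mem a ha, hS.inter_mem a ha,
    hS.superset_mem a ha⟩

theorem positive_of_positive_preimage (hS : IsCSystemOfFilters C F) {b : ZFSet.{u}}
    (ha : a ∈ C) (hb : b ∈ C) (hab : a ⊆ b) {A B : Set ZFSet.{u}} (hB : Positive (O b) (F b) B)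
    (hBA : B ⊆ {f | f ∈ O b ∧ restr f a ∈ A}) : Positive (O a) (F a) A := fun hA => by
  obtain ⟨f, hfB, -, hfA⟩ := (hS.isFilterOn hb).inter_nonempty_of_positive hB
    ((hS.compat a ha b hb hab _ Set.sdiff_subset).1 hA)
  exact hfA.2 (hBA hfB).2

theorem isFilterOn_dFil (hS : IsCSystemOfFilters C F) (ha : a ∈ C) :
    IsFilterOn {b | b ⊆ a} (dFil F a) :=
  (hS.isFilterOn ha).image fun _ => zdomZ_subset_of_mem_O

theorem fine_mem_dFil (hS : IsCSystemOfFilters C F) (ha : a ∈ C) {x : ZFSet.{u}} (hx : x ∈ a) :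
    {b | b ⊆ a ∧ x ∈ b} ∈ dFil F a :=
  ⟨fun _ hb => hb.1, _, hS.fineness a ha x hx,
    fun _ ⟨hfO, hxf⟩ => ⟨zdomZ_subset_of_mem_O hfO, mem_zdomZ.2 hxf⟩⟩

theorem normal_dFil (hS : IsCSystemOfFilters C F) (ha : a ∈ C) {D : Set ZFSet.{u}}
    (hD : Positive {b | b ⊆ a} (dFil F a) D) {u : ZFSet.{u} → ZFSet.{u}} (hu : ∀ c ∈ D, u c ∈ c) :
    ∃ y, Positive {b | b ⊆ a} (dFil F a) {c ∈ D | u c = y} := by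
  have hdom : Set.MapsTo zdomZ (O a) {b | b ⊆ a} := fun _ => zdomZ_subset_of_mem_O
  obtain ⟨b, hb, hab, B, hBA, hB, y, hyb, hy⟩ := hS.normality a ha _ (fun _ hf => hf.1)
    (((hS.isFilterOn ha).positive_image_iff hdom).1 hD) (fun g => app g (u (zdomZ g)))
    fun g hg => ⟨_, mem_zdomZ.1 (hu _ hg.2), Or.inl rfl⟩
  refine ⟨y, ((hS.isFilterOn ha).positive_image_iff hdom).2 <|
    hS.positive_of_positive_preimage ha hb hab
      ((hS.isFilterOn hb).positive_inter hB (hS.fineness b hb y hyb)) ?_⟩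
  rintro f ⟨hfB, hfO, hyf⟩
  obtain ⟨hfaO, hfaD⟩ := (hBA hfB).2
  obtain ⟨hxf, hxa⟩ := mem_zdomZ_restr.1 (hu _ hfaD)
  exact ⟨hfO, hfaO, hfaD,
    app_injOn_of_mem_O hfO hxf (mem_zdomZ.2 hyf) ((app_restr hxa).symm.trans (hy f hfB))⟩

theorem isNormalFineFilter_dFil (hS : IsCSystemOfFilters C F) (ha : a ∈ C) :
    IsNormalFineFilter a (dFil F a) :=
  { hS.isFilterOn_dFil ha with
    fine := fun _ => hS.fine_mem_dFil ha
    normal := fun _ hD _ hu => hS.normal_dFil ha hD hu }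

end IsCSystemOfFilters

end CSF

open CSF

theorem stmt_5_general (C : Set ZFSet) (F : ZFSet → Set (Set ZFSet))
    (hS : IsCSystemOfFilters C F) (a : ZFSet) (ha : a ∈ C) :
    -- non-triviality
    ((∅ : Set ZFSet) ∉ dFil F a) ∧
    -- closure under intersections (upward closure in `P(a)` holds by definition)
    (∀ D ∈ dFil F a, ∀ D' ∈ dFil F a, D ∩ D' ∈ dFil F a) ∧
    -- fineness
    (∀ x, x ∈ a → {b : ZFSet | b ⊆ a ∧ x ∈ b} ∈ dFil F a) ∧
    -- normality: every choice function on a positive set is constant on a positive set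
    (∀ D : Set ZFSet, D ⊆ {b : ZFSet | b ⊆ a} →
      ({b : ZFSet | b ⊆ a} \ D) ∉ dFil F a →
      ∀ u : ZFSet → ZFSet, (∀ b ∈ D, u b ∈ b) →
      ∃ x : ZFSet, ({b : ZFSet | b ⊆ a} \ {b ∈ D | u b = x}) ∉ dFil F a) ∧
    -- stationarity of `dom[A]` in `P(a)` for uncountable `a`
    (¬ a.toSet.Countable → ∀ A ∈ F a, ∀ g : Finset ZFSet → ZFSet,
      (∀ s : Finset ZFSet, ↑s ⊆ a.toSet → g s ∈ a) →
      ∃ f ∈ A, ∀ s : Finset ZFSet, ↑s ⊆ (zdomZ f).toSet → g s ∈ zdomZ f) := by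
  have hdF := hS.isNormalFineFilter_dFil ha
  refine ⟨hdF.empty_not_mem, hdF.inter_mem, hdF.fine, fun D _ hD u hu => hdF.normal D hD u hu, ?_⟩
  intro hunc A hA g hg
  have hinf : (a : Set ZFSet).Infinite := fun hfin => hunc hfin.countable
  obtain ⟨-, A', hA', hclosed⟩ := hdF.closure_mem hinf g hg
  obtain ⟨f, hfA, hfA'⟩ :=
    (hS.isFilterOn ha).nonempty_of_mem ((hS.isFilterOn ha).inter_mem _ hA _ hA')
  exact ⟨f, hfA, (hclosed f hfA').2⟩

/-- For a `C`-system of filters `S` and infinite `a ∈ C`, `dF_a = {dom[A] : A ∈ F_a}`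
generates a normal and fine (non-trivial) filter on `P(a)`; in particular, if `a` is
uncountable then `dom[A]` is stationary in `P(a)` for every `A ∈ F_a`. -/
theorem stmt_5 (C : Set ZFSet) (F : ZFSet → Set (Set ZFSet))
    (hS : IsCSystemOfFilters C F) (a : ZFSet) (ha : a ∈ C)
    (hinf : a.toSet.Infinite) :
    -- non-triviality
    ((∅ : Set ZFSet) ∉ dFil F a) ∧
    -- closure under intersections (upward closure in `P(a)` holds by definition)
    (∀ D ∈ dFil F a, ∀ D' ∈ dFil F a, D ∩ D' ∈ dFil F a) ∧
    -- fineness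
    (∀ x, x ∈ a → {b : ZFSet | b ⊆ a ∧ x ∈ b} ∈ dFil F a) ∧
    -- normality: every choice function on a positive set is constant on a positive set
    (∀ D : Set ZFSet, D ⊆ {b : ZFSet | b ⊆ a} →
      ({b : ZFSet | b ⊆ a} \ D) ∉ dFil F a →
      ∀ u : ZFSet → ZFSet, (∀ b ∈ D, u b ∈ b) →
      ∃ x : ZFSet, ({b : ZFSet | b ⊆ a} \ {b ∈ D | u b = x}) ∉ dFil F a) ∧
    -- stationarity of `dom[A]` in `P(a)` for uncountable `a`
    (¬ a.toSet.Countable → ∀ A ∈ F a, ∀ g : Finset ZFSet → ZFSet,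
      (∀ s : Finset ZFSet, ↑s ⊆ a.toSet → g s ∈ a) →
      ∃ f ∈ A, ∀ s : Finset ZFSet, ↑s ⊆ (zdomZ f).toSet → g s ∈ zdomZ f) :=
  stmt_5_general C F hS a ha
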